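/- arXiv:0903.3528 — 4 statements merged into one kernel-verified Lean document; each statement's English description precedes it below -/
import Mathlib

section
/- If A is an n×n complex Hermitian matrix and 0 < r ≤ 2, then the sum over k of |λ_k(A)|^r is at most the sum over i of (Σ_j |A_{ij}|²)^{r/2}, where λ_1(A),…,λ_n(A) are the (real) eigenvalues of A. -/
/-!
Let `v_k` be an orthonormal eigenbasis of `A`, with eigenvalues `λ_k`, and `e_i` the standard
basis. The weights `w_ik = |⟪v_k, e_i⟫|²` form a doubly stochastic matrix, and Parseval gives
`Σ_j |A_ij|² = ‖A e_i‖² = Σ_k w_ik λ_k²`. Since `t ↦ t ^ (r / 2)` is concave for `r ≤ 2`,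
Jensen's inequality in each row gives `Σ_k w_ik |λ_k|^r ≤ (Σ_j |A_ij|²)^(r/2)`; summing over `i`
and using that the columns of `w` sum to one yields the claim.
-/

open scoped InnerProductSpace

theorem Real.sum_mul_abs_rpow_le_sum_mul_sq_rpow {ι : Type*} (s : Finset ι) {w : ι → ℝ}
    (hw : ∀ i ∈ s, 0 ≤ w i) (hw' : ∑ i ∈ s, w i = 1) (z : ι → ℝ) {r : ℝ} (hr0 : 0 < r)
    (hr2 : r ≤ 2) :
    ∑ i ∈ s, w i * |z i| ^ r ≤ (∑ i ∈ s, w i * z i ^ 2) ^ (r / 2) := by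
  have hp : 1 ≤ 2 / r := by rw [le_div_iff₀ hr0]; linarith
  have hz : ∀ i, (|z i| ^ r) ^ (2 / r) = z i ^ 2 := fun i => by
    rw [← Real.rpow_mul (abs_nonneg _), mul_div_cancel₀ _ hr0.ne', Real.rpow_two, sq_abs]
  simpa only [hz, one_div_div] using
    Real.arith_mean_le_rpow_mean s w (fun i => |z i| ^ r) hw hw' (fun i _ => by positivity) hp

namespace LinearMap.IsSymmetric

variable {𝕜 E ι : Type*} [RCLike 𝕜] [NormedAddCommGroup E] [InnerProductSpace 𝕜 E] [Fintype ι]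
  {T : E →ₗ[𝕜] E} {v : OrthonormalBasis ι 𝕜 E} {μ : ι → ℝ}

theorem norm_apply_sq_eq_sum (hT : T.IsSymmetric) (hv : ∀ k, T (v k) = (μ k : 𝕜) • v k)
    (x : E) : ‖T x‖ ^ 2 = ∑ k, ‖⟪v k, x⟫_𝕜‖ ^ 2 * μ k ^ 2 := by
  rw [← v.sum_sq_norm_inner_right]
  refine Finset.sum_congr rfl fun k _ => ?_
  rw [← hT, hv, inner_smul_left, RCLike.conj_ofReal, norm_mul, RCLike.norm_ofReal, mul_pow,
    sq_abs, mul_comm]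

theorem sum_abs_rpow_le_sum_norm_apply_rpow (hT : T.IsSymmetric)
    (hv : ∀ k, T (v k) = (μ k : 𝕜) • v k) {κ : Type*} [Fintype κ] (e : OrthonormalBasis κ 𝕜 E)
    {r : ℝ} (hr0 : 0 < r) (hr2 : r ≤ 2) :
    ∑ k, |μ k| ^ r ≤ ∑ i, ‖T (e i)‖ ^ r := by
  set w : κ → ι → ℝ := fun i k => ‖⟪v k, e i⟫_𝕜‖ ^ 2
  have hw_col : ∀ k, ∑ i, w i k = 1 := fun k => by
    simp only [w, ← inner_conj_symm (v k), RCLike.norm_conj, e.sum_sq_norm_inner_right,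
      v.orthonormal.1 k, one_pow]
  have hw_row : ∀ i, ∑ k, w i k = 1 := fun i => by
    simp only [w, v.sum_sq_norm_inner_right, e.orthonormal.1 i, one_pow]
  calc ∑ k, |μ k| ^ r
      = ∑ i, ∑ k, w i k * |μ k| ^ r := by
        rw [Finset.sum_comm]
        simp only [← Finset.sum_mul, hw_col, one_mul]
    _ ≤ ∑ i, (∑ k, w i k * μ k ^ 2) ^ (r / 2) := by
        gcongr with i
        exact Real.sum_mul_abs_rpow_le_sum_mul_sq_rpow _ (fun k _ => by positivity) (hw_row i)
          μ hr0 hr2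
    _ = ∑ i, ‖T (e i)‖ ^ r := by
        simp only [w, ← norm_apply_sq_eq_sum hT hv, ← Real.rpow_natCast_mul (norm_nonneg _),
          Nat.cast_ofNat, mul_div_cancel₀ r two_ne_zero]

end LinearMap.IsSymmetric

namespace Matrix.IsHermitian

variable {𝕜 n : Type*} [RCLike 𝕜] [Fintype n] [DecidableEq n] {A : Matrix n n 𝕜}

theorem toEuclideanLin_eigenvectorBasis (hA : A.IsHermitian) (k : n) :
    toEuclideanLin A (hA.eigenvectorBasis k) = (hA.eigenvalues k : 𝕜) • hA.eigenvectorBasis k := by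
  rw [toEuclideanLin, toLpLin_apply, hA.mulVec_eigenvectorBasis,
    RCLike.real_smul_eq_coe_smul (K := 𝕜)]
  rfl

theorem norm_toEuclideanLin_single_sq (hA : A.IsHermitian) (i : n) :
    ‖toEuclideanLin A (EuclideanSpace.single i 1)‖ ^ 2 = ∑ j, ‖A i j‖ ^ 2 := by
  simp [EuclideanSpace.norm_sq_eq, ← hA.apply i]

end Matrix.IsHermitian

/-- **Schatten bound.** If `A` is an `n×n` complex Hermitian matrix and
`0 < r ≤ 2`, then `Σ_k |λ_k(A)|^r ≤ Σ_i (Σ_j |A_{ij}|²)^{r/2}`. -/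
theorem stmt1 {n : ℕ} (A : Matrix (Fin n) (Fin n) ℂ) (hA : A.IsHermitian)
    (r : ℝ) (hr0 : 0 < r) (hr2 : r ≤ 2) :
    ∑ k, |hA.eigenvalues k| ^ r ≤ ∑ i, (∑ j, ‖A i j‖ ^ 2) ^ (r / 2) := by
  calc ∑ k, |hA.eigenvalues k| ^ r
      ≤ ∑ i, ‖Matrix.toEuclideanLin A (EuclideanSpace.basisFun (Fin n) ℂ i)‖ ^ r :=
        (Matrix.isSymmetric_toEuclideanLin_iff.mpr hA).sum_abs_rpow_le_sum_norm_apply_rpow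
          hA.toEuclideanLin_eigenvectorBasis _ hr0 hr2
    _ = ∑ i, (∑ j, ‖A i j‖ ^ 2) ^ (r / 2) := by
        simp only [EuclideanSpace.basisFun_apply, ← hA.norm_toEuclideanLin_single_sq,
          ← Real.rpow_natCast_mul (norm_nonneg _), Nat.cast_ofNat, mul_div_cancel₀ r two_ne_zero]
end

section
/- Tauberian-type implication: let μ be a symmetric probability measure on ℝ, 0 < α < 2, and c > 0. If Im m_μ(it) − t^{-1} ∼ −Δ(α) c t^{-α-1} as t → +∞, where Δ(α) = 2α ∫_0^∞ x^{1-α}/(1+x²) dx, then μ((t,∞)) ∼ c t^{-α} as t → +∞. -/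
/-!
Let `ν` be the law of `|X|` for `X ∼ μ`, and `G = kernel 1` where `kernel a v = v² / (a + v²)`.
Since `1 - t Im m_μ(it) = ∫ G (u / t) dν`, the hypothesis says that
`t ^ α ∫ f (u / t) dν → K ∫₀^∞ f v v ^ (-α - 1) dv` with `K = 2cα` for `f = G`, and by scaling for
every `f = kernel a`. The test functions `f` with this property form a vector space, closed under
approximation uniformly relative to `G`. Partial fractions put products of kernels with distinct
parameters in the span of the kernels, and such products approximate the powers of `G`; hence
`G · (p ∘ G)` for every polynomial `p` and, by Weierstrass, `G · (ψ ∘ G)` for every continuous `ψ`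
are test functions. Sandwiching the indicator of `(1, ∞)` between two ramps of this form gives
`t ^ α ν (t, ∞) → K / α = 2c`, and `ν (t, ∞) = 2 μ (t, ∞)` by symmetry.
-/

open MeasureTheory Filter Set
open scoped Topology Polynomial

namespace Tauberian

noncomputable def kernel (a v : ℝ) : ℝ := v ^ 2 / (a + v ^ 2)

lemma kernel_nonneg {a : ℝ} (ha : 0 ≤ a) (v : ℝ) : 0 ≤ kernel a v := by
  unfold kernel; positivity

lemma kernel_le_one {a : ℝ} (ha : 0 ≤ a) (v : ℝ) : kernel a v ≤ 1 := by
  unfold kernel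
  exact div_le_one_of_le₀ (by linarith) (by positivity)

lemma abs_kernel_le {a : ℝ} (ha : 0 ≤ a) (v : ℝ) : |kernel a v| ≤ 1 :=
  abs_le.2 ⟨by linarith [kernel_nonneg ha v], kernel_le_one ha v⟩

@[fun_prop]
lemma measurable_kernel (a : ℝ) : Measurable (kernel a) := by
  unfold kernel; fun_prop

lemma kernel_comp_div_sqrt {a : ℝ} (ha : 0 < a) : (fun v => kernel 1 (v / √a)) = kernel a := by
  funext v
  have : (0 : ℝ) < a + v ^ 2 := by positivity
  simp only [kernel, div_pow, Real.sq_sqrt ha.le]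
  field_simp

lemma kernel_div_abs (a t x : ℝ) : kernel a (|x| / t) = kernel a (x / t) := by
  simp only [kernel, div_pow, sq_abs]

lemma kernel_one_mul_rpow {v : ℝ} (hv : 0 < v) (α : ℝ) :
    kernel 1 v * v ^ (-α - 1) = v ^ (1 - α) / (1 + v ^ 2) := by
  have : v ^ 2 * v ^ (-α - 1) = v ^ (1 - α) := by
    rw [← Real.rpow_natCast, ← Real.rpow_add hv]; norm_num; ring_nf
  rw [kernel, div_mul_eq_mul_div, this]

lemma strictMonoOn_kernel_one : StrictMonoOn (kernel 1) (Ici 0) := by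
  intro v hv w _ hvw
  simp only [kernel]
  rw [div_lt_div_iff₀ (by positivity) (by positivity)]
  nlinarith [mul_self_lt_mul_self (mem_Ici.1 hv) hvw]

lemma kernel_one_pos {v : ℝ} (hv : v ≠ 0) : 0 < kernel 1 v := by
  unfold kernel; positivity

lemma kernel_mul_kernel {a b : ℝ} (ha : 0 < a) (hb : 0 < b) (hab : a ≠ b) :
    kernel b * kernel a = (b / (b - a)) • kernel b + (a / (a - b)) • kernel a := by
  funext v
  have : (0 : ℝ) < a + v ^ 2 := by positivity
  have : (0 : ℝ) < b + v ^ 2 := by positivity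
  have : a - b ≠ 0 := sub_ne_zero.2 hab
  have : b - a ≠ 0 := sub_ne_zero.2 hab.symm
  simp only [Pi.mul_apply, Pi.add_apply, Pi.smul_apply, smul_eq_mul, kernel]
  field_simp
  ring

lemma abs_kernel_one_sub_kernel_le {b : ℝ} (hb : 1 ≤ b) (v : ℝ) :
    |kernel 1 v - kernel b v| ≤ (b - 1) * kernel 1 v := by
  have h1 : (0 : ℝ) < 1 + v ^ 2 := by positivity
  have h2 : (0 : ℝ) < b + v ^ 2 := by positivity
  have : kernel 1 v - kernel b v = (b - 1) * kernel 1 v / (b + v ^ 2) := by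
    simp only [kernel]; field_simp; ring
  rw [this, abs_of_nonneg (by have := kernel_nonneg zero_le_one v; positivity)]
  exact div_le_self (by have := kernel_nonneg zero_le_one v; nlinarith) (by nlinarith)

lemma abs_prod_sub_prod_le {ι : Type*} (s : Finset ι) {x y : ι → ℝ}
    (hx : ∀ i ∈ s, |x i| ≤ 1) (hy : ∀ i ∈ s, |y i| ≤ 1) :
    |∏ i ∈ s, x i - ∏ i ∈ s, y i| ≤ ∑ i ∈ s, |x i - y i| := by
  classical
  induction s using Finset.induction_on with
  | empty => simp
  | insert j s hj ih =>
    rw [Finset.prod_insert hj, Finset.prod_insert hj, Finset.sum_insert hj]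
    have hxs : ∀ i ∈ s, |x i| ≤ 1 := fun i hi => hx i (Finset.mem_insert_of_mem hi)
    have hys : ∀ i ∈ s, |y i| ≤ 1 := fun i hi => hy i (Finset.mem_insert_of_mem hi)
    have hprod : |∏ i ∈ s, x i| ≤ 1 := by
      rw [Finset.abs_prod]
      exact Finset.prod_le_one (fun i _ => abs_nonneg _) hxs
    calc |x j * ∏ i ∈ s, x i - y j * ∏ i ∈ s, y i|
        = |(x j - y j) * ∏ i ∈ s, x i + y j * (∏ i ∈ s, x i - ∏ i ∈ s, y i)| := by ring_nf
      _ ≤ |x j - y j| * 1 + 1 * ∑ i ∈ s, |x i - y i| := by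
        refine (abs_add_le _ _).trans (add_le_add ?_ ?_) <;> rw [abs_mul]
        · exact mul_le_mul_of_nonneg_left hprod (abs_nonneg _)
        · exact mul_le_mul (hy j (Finset.mem_insert_self j s)) (ih hxs hys) (abs_nonneg _)
            zero_le_one
      _ = _ := by ring

lemma abs_kernel_one_pow_sub_prod_le {A : Finset ℝ} {η : ℝ} (hA : ∀ a ∈ A, a ∈ Icc 1 (1 + η))
    (v : ℝ) : |kernel 1 v ^ A.card - ∏ a ∈ A, kernel a v| ≤ A.card * η * kernel 1 v := by
  calc |kernel 1 v ^ A.card - ∏ a ∈ A, kernel a v|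
      ≤ ∑ a ∈ A, |kernel 1 v - kernel a v| := by
        rw [← Finset.prod_const]
        exact abs_prod_sub_prod_le A (fun _ _ => abs_kernel_le zero_le_one v)
          (fun a ha => abs_kernel_le (zero_le_one.trans (hA a ha).1) v)
    _ ≤ ∑ _a ∈ A, η * kernel 1 v := Finset.sum_le_sum fun a ha =>
        (abs_kernel_one_sub_kernel_le (hA a ha).1 v).trans <| by
          gcongr
          · exact kernel_nonneg zero_le_one v
          · linarith [(hA a ha).2]
    _ = A.card * η * kernel 1 v := by rw [Finset.sum_const, nsmul_eq_mul, mul_assoc]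

lemma kernel_mul_mem_span {s : Set ℝ} (hs : s ⊆ Ioi 0) {b : ℝ} (hb : 0 < b) (hbs : b ∉ s)
    {f : ℝ → ℝ} (hf : f ∈ Submodule.span ℝ (kernel '' s)) :
    kernel b * f ∈ Submodule.span ℝ (kernel '' insert b s) := by
  have : (Submodule.span ℝ (kernel '' s)).map (LinearMap.mulLeft ℝ (kernel b)) ≤
      Submodule.span ℝ (kernel '' insert b s) := by
    rw [Submodule.map_span, Submodule.span_le]
    rintro _ ⟨_, ⟨a, ha, rfl⟩, rfl⟩
    rw [LinearMap.mulLeft_apply, kernel_mul_kernel (hs ha) hb (ne_of_mem_of_not_mem ha hbs)]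
    exact add_mem (Submodule.smul_mem _ _ (Submodule.subset_span ⟨b, mem_insert _ _, rfl⟩))
      (Submodule.smul_mem _ _ (Submodule.subset_span ⟨a, mem_insert_of_mem _ ha, rfl⟩))
  exact this ⟨f, hf, rfl⟩

lemma prod_kernel_mem_span {A : Finset ℝ} (hA : A.Nonempty) (hpos : ∀ a ∈ A, 0 < a) :
    ∏ a ∈ A, kernel a ∈ Submodule.span ℝ (kernel '' A) := by
  induction hA using Finset.Nonempty.cons_induction with
  | singleton a => simp
  | cons b A hb hA ih =>
    rw [Finset.prod_cons, Finset.coe_cons]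
    exact kernel_mul_mem_span (fun a ha => hpos a (by simp [Finset.mem_coe.1 ha]))
      (hpos b (by simp)) (by simpa using hb) (ih fun a ha => hpos a (by simp [ha]))

lemma tendsto_of_forall_approx {ι : Type*} {l : Filter ι} {u : ι → ℝ} {a : ℝ}
    (h : ∀ ε > 0, ∃ (w : ι → ℝ) (b : ℝ), Tendsto w l (𝓝 b) ∧ |a - b| ≤ ε ∧
      ∀ᶠ x in l, |u x - w x| ≤ ε) :
    Tendsto u l (𝓝 a) := by
  refine Metric.tendsto_nhds.2 fun ε hε => ?_
  obtain ⟨w, b, hw, hab, huw⟩ := h (ε / 3) (by positivity)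
  filter_upwards [huw, Metric.tendsto_nhds.1 hw (ε / 3) (by positivity)] with x hux hwx
  rw [Real.dist_eq] at hwx ⊢
  linarith [abs_sub_le (u x) (w x) a, abs_sub_le (w x) b a, abs_sub_comm a b]

lemma abs_integral_sub_integral_le {X : Type*} [MeasurableSpace X] {μ : Measure X}
    {f g h : X → ℝ} {δ : ℝ} (hf : Integrable f μ) (hg : Integrable g μ) (hh : Integrable h μ)
    (hle : ∀ᵐ x ∂μ, |f x - g x| ≤ δ * h x) :
    |∫ x, f x ∂μ - ∫ x, g x ∂μ| ≤ δ * ∫ x, h x ∂μ := by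
  rw [← integral_sub hf hg, ← integral_const_mul]
  exact norm_integral_le_of_norm_le (f := fun x => f x - g x) (hh.const_mul δ) hle

noncomputable def weightedIntegral (α : ℝ) (f : ℝ → ℝ) : ℝ :=
  ∫ v in Ioi 0, f v * v ^ (-α - 1)

variable {α : ℝ}

lemma integrableOn_kernel_one_mul_rpow (hα0 : 0 < α) (hα2 : α < 2) :
    IntegrableOn (fun v => kernel 1 v * v ^ (-α - 1)) (Ioi 0) := by
  have hmeas : Measurable fun v : ℝ => kernel 1 v * v ^ (-α - 1) := by fun_prop
  rw [← Ioc_union_Ioi_eq_Ioi zero_le_one]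
  refine IntegrableOn.union ?_ ?_
  · have hint : IntegrableOn (fun v : ℝ => v ^ (1 - α)) (Ioc 0 1) := by
      rw [← intervalIntegrable_iff_integrableOn_Ioc_of_le zero_le_one]
      exact intervalIntegral.intervalIntegrable_rpow' (r := 1 - α) (by linarith)
    refine hint.mono' hmeas.aestronglyMeasurable.restrict <|
      (ae_restrict_iff' measurableSet_Ioc).2 (ae_of_all _ fun v hv => ?_)
    have hv0 : 0 < v := hv.1
    rw [kernel_one_mul_rpow hv0, Real.norm_of_nonneg (by positivity)]
    exact div_le_self (by positivity) (by nlinarith)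
  · refine (integrableOn_Ioi_rpow_of_lt (a := -α - 1) (by linarith) zero_lt_one).mono'
      hmeas.aestronglyMeasurable.restrict <|
      (ae_restrict_iff' measurableSet_Ioi).2 (ae_of_all _ fun v hv => ?_)
    have hv : (0 : ℝ) < v := zero_lt_one.trans hv
    rw [norm_mul, Real.norm_of_nonneg (kernel_nonneg zero_le_one v),
      Real.norm_of_nonneg (by positivity)]
    exact mul_le_of_le_one_left (by positivity) (kernel_le_one zero_le_one v)

lemma integrableOn_mul_rpow_of_abs_le {f g : ℝ → ℝ} {C : ℝ}
    (hg : IntegrableOn (fun v => g v * v ^ (-α - 1)) (Ioi 0)) (hf : Measurable f)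
    (hfg : ∀ v, |f v| ≤ C * g v) :
    IntegrableOn (fun v => f v * v ^ (-α - 1)) (Ioi 0) := by
  refine (hg.const_mul C).mono' (by fun_prop) <|
    (ae_restrict_iff' measurableSet_Ioi).2 (ae_of_all _ fun v (hv : 0 < v) => ?_)
  rw [norm_mul, Real.norm_eq_abs, Real.norm_of_nonneg (by positivity), ← mul_assoc]
  exact mul_le_mul_of_nonneg_right (hfg v) (by positivity)

lemma integrableOn_mul_rpow_comp_div {f : ℝ → ℝ}
    (hf : IntegrableOn (fun v => f v * v ^ (-α - 1)) (Ioi 0)) {r : ℝ} (hr : 0 < r) :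
    IntegrableOn (fun v => f (v / r) * v ^ (-α - 1)) (Ioi 0) := by
  have h := (integrableOn_Ioi_comp_mul_left_iff (fun v => f v * v ^ (-α - 1)) 0
    (inv_pos.2 hr)).2 (by simpa using hf)
  have h' : IntegrableOn (fun v => r ^ (-α - 1) * (f (r⁻¹ * v) * (r⁻¹ * v) ^ (-α - 1)))
      (Ioi 0) := h.const_mul _
  refine h'.congr_fun (fun v (hv : 0 < v) => ?_) measurableSet_Ioi
  simp only [inv_mul_eq_div, Real.div_rpow hv.le hr.le]
  field_simp

lemma weightedIntegral_comp_div (f : ℝ → ℝ) {r : ℝ} (hr : 0 < r) :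
    weightedIntegral α (fun v => f (v / r)) = r ^ (-α) * weightedIntegral α f := by
  have := integral_comp_mul_left_Ioi' (fun v => f (v / r) * v ^ (-α - 1)) 0 hr
  rw [mul_zero] at this
  rw [weightedIntegral, ← this, smul_eq_mul, weightedIntegral, ← integral_const_mul,
    ← integral_const_mul]
  refine setIntegral_congr_fun measurableSet_Ioi fun v (hv : 0 < v) => ?_
  rw [mul_div_cancel_left₀ _ hr.ne', Real.mul_rpow hr.le hv.le,
    show -α - 1 = -α + -1 by ring, Real.rpow_add hr, Real.rpow_neg_one]
  field_simp

lemma abs_weightedIntegral_sub_le {f g h : ℝ → ℝ} {δ : ℝ}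
    (hf : IntegrableOn (fun v => f v * v ^ (-α - 1)) (Ioi 0))
    (hg : IntegrableOn (fun v => g v * v ^ (-α - 1)) (Ioi 0))
    (hh : IntegrableOn (fun v => h v * v ^ (-α - 1)) (Ioi 0))
    (hle : ∀ v, |f v - g v| ≤ δ * h v) :
    |weightedIntegral α f - weightedIntegral α g| ≤ δ * weightedIntegral α h := by
  refine abs_integral_sub_integral_le hf hg hh <|
    (ae_restrict_iff' measurableSet_Ioi).2 (ae_of_all _ fun v (hv : 0 < v) => ?_)
  rw [← sub_mul, abs_mul, abs_of_pos (Real.rpow_pos_of_pos hv _), ← mul_assoc]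
  exact mul_le_mul_of_nonneg_right (hle v) (by positivity)

lemma indicator_one_mul_rpow (s : Set ℝ) (p v : ℝ) :
    s.indicator (· ^ p) v = s.indicator 1 v * v ^ p := by
  simpa using indicator_mul_left (i := v) s 1 (· ^ p)

lemma weightedIntegral_indicator_Ioi (hα : 0 < α) {b : ℝ} (hb : 0 < b) :
    weightedIntegral α ((Ioi b).indicator 1) = b ^ (-α) / α := by
  simp_rw [weightedIntegral, ← indicator_one_mul_rpow]
  rw [setIntegral_indicator measurableSet_Ioi, Ioi_inter_Ioi, max_eq_right hb.le,
    integral_Ioi_rpow_of_lt (by linarith) hb]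
  rw [show -α - 1 + 1 = -α by ring, neg_div_neg_eq]

lemma integrableOn_indicator_Ioi_mul_rpow (hα : 0 < α) {b : ℝ} (hb : 0 < b) :
    IntegrableOn (fun v => (Ioi b).indicator 1 v * v ^ (-α - 1)) (Ioi 0) := by
  simp_rw [← indicator_one_mul_rpow]
  exact ((integrableOn_Ioi_rpow_of_lt (by linarith) hb).integrable_indicator
    measurableSet_Ioi).integrableOn

lemma weightedIntegral_mono {f g : ℝ → ℝ}
    (hf : IntegrableOn (fun v => f v * v ^ (-α - 1)) (Ioi 0))
    (hg : IntegrableOn (fun v => g v * v ^ (-α - 1)) (Ioi 0))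
    (hfg : ∀ v, 0 < v → f v ≤ g v) : weightedIntegral α f ≤ weightedIntegral α g :=
  setIntegral_mono_on hf hg measurableSet_Ioi fun v hv =>
    mul_le_mul_of_nonneg_right (hfg v hv) (Real.rpow_nonneg (le_of_lt hv) _)

/-- Tested against `f`, the tail of `ν` at scale `t → ∞` looks like `K v ^ (-α - 1) dv`. -/
structure HasTailLimit (ν : Measure ℝ) (α K : ℝ) (f : ℝ → ℝ) : Prop where
  measurable : Measurable f
  bounded : ∃ C, ∀ v, |f v| ≤ C
  integrableOn : IntegrableOn (fun v => f v * v ^ (-α - 1)) (Ioi 0)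
  tendsto : Tendsto (fun t => t ^ α * ∫ u, f (u / t) ∂ν) atTop (𝓝 (K * weightedIntegral α f))

lemma integrable_comp_div_of_abs_le {ν : Measure ℝ} [IsFiniteMeasure ν] {f : ℝ → ℝ} {C : ℝ}
    (hf : Measurable f) (hC : ∀ v, |f v| ≤ C) (t : ℝ) : Integrable (fun u => f (u / t)) ν :=
  .of_bound (hf.comp (measurable_id.div_const t)).aestronglyMeasurable C
    (ae_of_all _ fun _ => hC _)

namespace HasTailLimit

variable {ν : Measure ℝ} {K : ℝ} {f g : ℝ → ℝ}

lemma integrable_comp_div [IsFiniteMeasure ν] (hf : HasTailLimit ν α K f) (t : ℝ) :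
    Integrable (fun u => f (u / t)) ν :=
  have ⟨_, hC⟩ := hf.bounded
  integrable_comp_div_of_abs_le hf.measurable hC t

lemma zero : HasTailLimit ν α K 0 :=
  ⟨measurable_const, ⟨0, by simp⟩, by simp, by simp [weightedIntegral]⟩

lemma add [IsFiniteMeasure ν] (hf : HasTailLimit ν α K f) (hg : HasTailLimit ν α K g) :
    HasTailLimit ν α K (f + g) := by
  obtain ⟨Cf, hCf⟩ := hf.bounded
  obtain ⟨Cg, hCg⟩ := hg.bounded
  refine ⟨hf.measurable.add hg.measurable, ⟨Cf + Cg, fun v => ?_⟩, ?_, ?_⟩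
  · exact (abs_add_le _ _).trans (add_le_add (hCf v) (hCg v))
  · exact (hf.integrableOn.add hg.integrableOn).congr_fun (fun v _ => by simp [add_mul])
      measurableSet_Ioi
  · have hW : weightedIntegral α (f + g) = weightedIntegral α f + weightedIntegral α g := by
      simp only [weightedIntegral, Pi.add_apply, add_mul]
      exact integral_add hf.integrableOn hg.integrableOn
    rw [hW, mul_add]
    refine (hf.tendsto.add hg.tendsto).congr fun t => ?_
    simp only [Pi.add_apply]
    rw [integral_add (hf.integrable_comp_div t) (hg.integrable_comp_div t), mul_add]

lemma smul (r : ℝ) (hf : HasTailLimit ν α K f) : HasTailLimit ν α K (r • f) := by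
  obtain ⟨C, hC⟩ := hf.bounded
  refine ⟨hf.measurable.const_smul r, ⟨|r| * C, fun v => ?_⟩, ?_, ?_⟩
  · rw [Pi.smul_apply, smul_eq_mul, abs_mul]
    exact mul_le_mul_of_nonneg_left (hC v) (abs_nonneg r)
  · exact IntegrableOn.congr_fun (hf.integrableOn.const_mul r) (fun v _ => by simp [mul_assoc])
      measurableSet_Ioi
  · have hW : weightedIntegral α (r • f) = r * weightedIntegral α f := by
      simp only [weightedIntegral, Pi.smul_apply, smul_eq_mul, mul_assoc]
      exact integral_const_mul r _
    rw [hW, mul_left_comm]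
    refine (hf.tendsto.const_mul r).congr fun t => ?_
    simp only [Pi.smul_apply, smul_eq_mul]
    rw [integral_const_mul, mul_left_comm]

lemma comp_div (hf : HasTailLimit ν α K f) {r : ℝ} (hr : 0 < r) :
    HasTailLimit ν α K (fun v => f (v / r)) := by
  obtain ⟨C, hC⟩ := hf.bounded
  refine ⟨hf.measurable.comp (measurable_id.div_const r), ⟨C, fun v => hC _⟩,
    integrableOn_mul_rpow_comp_div hf.integrableOn hr, ?_⟩
  rw [weightedIntegral_comp_div f hr, mul_left_comm]
  have := (hf.tendsto.comp (tendsto_id.atTop_mul_const hr)).const_mul (r ^ (-α))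
  refine this.congr' ((eventually_gt_atTop 0).mono fun t ht => ?_)
  simp only [Function.comp_apply, id, div_div]
  rw [Real.mul_rpow ht.le hr.le, Real.rpow_neg hr.le]
  field_simp

lemma of_approx [IsFiniteMeasure ν] (h1 : HasTailLimit ν α K (kernel 1)) (hf : Measurable f)
    (happ : ∀ ε > 0, ∃ g, HasTailLimit ν α K g ∧ ∀ v, |f v - g v| ≤ ε * kernel 1 v) :
    HasTailLimit ν α K f := by
  obtain ⟨g, hg, hfg⟩ := happ 1 one_pos
  obtain ⟨C, hC⟩ := hg.bounded
  have hfC : ∀ v, |f v| ≤ 1 + C := fun v => by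
    have := abs_sub_abs_le_abs_sub (f v) (g v)
    nlinarith [hfg v, hC v, kernel_le_one zero_le_one v]
  have hfi : IntegrableOn (fun v => f v * v ^ (-α - 1)) (Ioi 0) :=
    ((integrableOn_mul_rpow_of_abs_le h1.integrableOn (hf.sub hg.measurable) hfg).add
      hg.integrableOn).congr_fun (fun v _ => by simp [sub_mul]) measurableSet_Ioi
  refine ⟨hf, ⟨1 + C, hfC⟩, hfi, tendsto_of_forall_approx fun ε hε => ?_⟩
  set L := K * weightedIntegral α (kernel 1)
  have hW1 : 0 ≤ weightedIntegral α (kernel 1) :=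
    setIntegral_nonneg measurableSet_Ioi fun v (hv : 0 < v) =>
      mul_nonneg (kernel_nonneg zero_le_one v) (by positivity)
  have hB : 0 < |L| + 1 := by positivity
  obtain ⟨g, hg, hfg⟩ := happ (ε / (|L| + 1)) (by positivity)
  refine ⟨_, _, hg.tendsto, ?_, ?_⟩
  · rw [← mul_sub, abs_mul]
    calc |K| * |weightedIntegral α f - weightedIntegral α g|
        ≤ |K| * (ε / (|L| + 1) * weightedIntegral α (kernel 1)) := by
          gcongr
          exact abs_weightedIntegral_sub_le hfi hg.integrableOn h1.integrableOn hfg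
      _ = ε / (|L| + 1) * |L| := by rw [abs_mul, abs_of_nonneg hW1]; ring
      _ ≤ ε := by
          rw [div_mul_eq_mul_div, div_le_iff₀ hB]; nlinarith
  · filter_upwards [h1.tendsto.eventually (gt_mem_nhds (lt_add_one L)), eventually_gt_atTop 0]
      with t hLt ht
    rw [← mul_sub, abs_mul, abs_of_nonneg (by positivity)]
    calc t ^ α * |∫ u, f (u / t) ∂ν - ∫ u, g (u / t) ∂ν|
        ≤ t ^ α * (ε / (|L| + 1) * ∫ u, kernel 1 (u / t) ∂ν) := by
          gcongr
          exact abs_integral_sub_integral_le (integrable_comp_div_of_abs_le hf hfC t)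
            (hg.integrable_comp_div t) (h1.integrable_comp_div t)
            (ae_of_all _ fun u => hfg (u / t))
      _ = ε / (|L| + 1) * (t ^ α * ∫ u, kernel 1 (u / t) ∂ν) := by ring
      _ ≤ ε := by
          rw [div_mul_eq_mul_div, div_le_iff₀ hB]
          nlinarith [le_abs_self L]

end HasTailLimit

def tailLimitSubmodule (ν : Measure ℝ) [IsFiniteMeasure ν] (α K : ℝ) :
    Submodule ℝ (ℝ → ℝ) where
  carrier := {f | HasTailLimit ν α K f}
  add_mem' := HasTailLimit.add
  zero_mem' := HasTailLimit.zero
  smul_mem' r _ hf := hf.smul r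

section KernelAlgebra

variable {ν : Measure ℝ} [IsFiniteMeasure ν] {K : ℝ}

lemma hasTailLimit_kernel_one_pow (hG : ∀ a, 0 < a → HasTailLimit ν α K (kernel a)) (n : ℕ) :
    HasTailLimit ν α K (kernel 1 ^ (n + 1)) := by
  refine .of_approx (hG 1 one_pos) ((measurable_kernel 1).pow_const _) fun ε hε => ?_
  obtain ⟨A, hA, hcard⟩ := (Icc_infinite (lt_add_of_pos_right 1
    (by positivity : 0 < ε / (n + 1)))).exists_subset_card_eq (n + 1)
  have hApos : ∀ a ∈ A, 0 < a := fun a ha => zero_lt_one.trans_le (hA ha).1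
  have hspan : ∏ a ∈ A, kernel a ∈ tailLimitSubmodule ν α K :=
    Submodule.span_le.2 (by rintro _ ⟨a, ha, rfl⟩; exact hG a (hApos a ha))
      (prod_kernel_mem_span (Finset.card_pos.1 (hcard ▸ n.succ_pos)) hApos)
  refine ⟨_, hspan, fun v => ?_⟩
  have := abs_kernel_one_pow_sub_prod_le (fun a ha => hA ha) v
  rw [hcard] at this
  simpa [Finset.prod_apply, mul_div_cancel₀ ε (by positivity : (n + 1 : ℝ) ≠ 0)] using this

lemma hasTailLimit_kernel_one_mul_eval (hG : ∀ a, 0 < a → HasTailLimit ν α K (kernel a))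
    (p : ℝ[X]) :
    HasTailLimit ν α K (fun v => kernel 1 v * p.eval (kernel 1 v)) := by
  induction p using Polynomial.induction_on' with
  | add p q hp hq =>
    convert hp.add hq using 1
    funext v
    simp only [Polynomial.eval_add, mul_add, Pi.add_apply]
  | monomial n a =>
    convert (hasTailLimit_kernel_one_pow hG n).smul a using 1
    funext v
    simp only [Polynomial.eval_monomial, Pi.smul_apply, Pi.pow_apply, smul_eq_mul]
    ring

lemma hasTailLimit_kernel_one_mul_comp (hG : ∀ a, 0 < a → HasTailLimit ν α K (kernel a))
    {ψ : ℝ → ℝ} (hψ : Continuous ψ) :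
    HasTailLimit ν α K (fun v => kernel 1 v * ψ (kernel 1 v)) := by
  refine .of_approx (hG 1 one_pos) (by fun_prop) fun ε hε => ?_
  obtain ⟨p, hp⟩ := exists_polynomial_near_of_continuousOn 0 1 ψ hψ.continuousOn ε hε
  refine ⟨_, hasTailLimit_kernel_one_mul_eval hG p, fun v => ?_⟩
  have h0 := kernel_nonneg zero_le_one v
  rw [← mul_sub, abs_mul, abs_of_nonneg h0, abs_sub_comm, mul_comm]
  exact mul_le_mul_of_nonneg_right (hp _ ⟨h0, kernel_le_one zero_le_one v⟩).le h0

end KernelAlgebra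

noncomputable def ramp (c₁ c₂ s : ℝ) : ℝ := min 1 (max 0 ((s - c₁) / (c₂ - c₁)))

section Ramp

variable {c₁ c₂ s : ℝ}

lemma ramp_mem_Icc : ramp c₁ c₂ s ∈ Icc 0 1 :=
  ⟨le_min zero_le_one (le_max_left _ _), min_le_left _ _⟩

lemma ramp_of_le (hc : c₁ < c₂) (hs : s ≤ c₁) : ramp c₁ c₂ s = 0 := by
  rw [ramp, max_eq_left (div_nonpos_of_nonpos_of_nonneg (by linarith) (by linarith))]
  exact min_eq_right zero_le_one

lemma ramp_of_ge (hc : c₁ < c₂) (hs : c₂ ≤ s) : ramp c₁ c₂ s = 1 :=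
  min_eq_left <| le_max_of_le_right <| (one_le_div (by linarith)).2 (by linarith)

lemma continuous_ramp (c₁ c₂ : ℝ) : Continuous (ramp c₁ c₂) := by
  unfold ramp; fun_prop

lemma ramp_eq_mul (hc₁ : 0 < c₁) (hc : c₁ < c₂) :
    ramp c₁ c₂ s = s * (ramp c₁ c₂ s / max s c₁) := by
  rcases le_or_gt s c₁ with h | h
  · simp [ramp_of_le hc h]
  · rw [max_eq_left h.le, mul_div_cancel₀ _ (hc₁.trans h).ne']

lemma continuous_ramp_div_max (hc₁ : 0 < c₁) :
    Continuous fun s => ramp c₁ c₂ s / max s c₁ :=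
  (continuous_ramp c₁ c₂).div (continuous_id.max continuous_const) fun s =>
    (hc₁.trans_le (le_max_right s c₁)).ne'

end Ramp

section Sandwich

variable {b₁ b₂ v : ℝ}

lemma indicator_Ioi_le_ramp_kernel_one (hb₁ : 0 < b₁) (hb : b₁ < b₂) (hv : 0 ≤ v) :
    (Ioi b₂).indicator 1 v ≤ ramp (kernel 1 b₁) (kernel 1 b₂) (kernel 1 v) := by
  have hk := strictMonoOn_kernel_one (le_of_lt hb₁) (hb₁.trans hb).le hb
  by_cases h : v ∈ Ioi b₂
  · rw [indicator_of_mem h, Pi.one_apply, ramp_of_ge hk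
      (strictMonoOn_kernel_one.le_iff_le (hb₁.trans hb).le hv |>.2 (le_of_lt h))]
  · rw [indicator_of_notMem h]; exact ramp_mem_Icc.1

lemma ramp_kernel_one_le_indicator_Ioi (hb₁ : 0 < b₁) (hb : b₁ < b₂) (hv : 0 ≤ v) :
    ramp (kernel 1 b₁) (kernel 1 b₂) (kernel 1 v) ≤ (Ioi b₁).indicator 1 v := by
  have hk := strictMonoOn_kernel_one (le_of_lt hb₁) (hb₁.trans hb).le hb
  by_cases h : v ∈ Ioi b₁
  · rw [indicator_of_mem h, Pi.one_apply]; exact ramp_mem_Icc.2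
  · rw [indicator_of_notMem h, ramp_of_le hk
      (strictMonoOn_kernel_one.le_iff_le hv hb₁.le |>.2 (not_lt.1 h))]

end Sandwich

lemma rpow_neg_div_le_weightedIntegral (hα : 0 < α) {b : ℝ} (hb : 0 < b) {f : ℝ → ℝ}
    (hf : IntegrableOn (fun v => f v * v ^ (-α - 1)) (Ioi 0))
    (hle : ∀ v, 0 < v → (Ioi b).indicator 1 v ≤ f v) :
    b ^ (-α) / α ≤ weightedIntegral α f :=
  weightedIntegral_indicator_Ioi hα hb ▸
    weightedIntegral_mono (integrableOn_indicator_Ioi_mul_rpow hα hb) hf hle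

lemma weightedIntegral_le_rpow_neg_div (hα : 0 < α) {b : ℝ} (hb : 0 < b) {f : ℝ → ℝ}
    (hf : IntegrableOn (fun v => f v * v ^ (-α - 1)) (Ioi 0))
    (hle : ∀ v, 0 < v → f v ≤ (Ioi b).indicator 1 v) :
    weightedIntegral α f ≤ b ^ (-α) / α :=
  weightedIntegral_indicator_Ioi hα hb ▸
    weightedIntegral_mono hf (integrableOn_indicator_Ioi_mul_rpow hα hb) hle

lemma integrable_indicator_Ioi_one_comp_div (ν : Measure ℝ) [IsFiniteMeasure ν] (t : ℝ) :
    Integrable (fun u => (Ioi 1).indicator (1 : ℝ → ℝ) (u / t)) ν :=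
  integrable_comp_div_of_abs_le (C := 1) (measurable_one.indicator measurableSet_Ioi)
    (fun _ => (norm_indicator_le_norm_self (1 : ℝ → ℝ) _).trans (by simp)) t

lemma integral_indicator_Ioi_one_comp_div (ν : Measure ℝ) {t : ℝ} (ht : 0 < t) :
    ∫ u, (Ioi 1).indicator 1 (u / t) ∂ν = ν.real (Ioi t) := by
  have : (fun u => (Ioi (1 : ℝ)).indicator (1 : ℝ → ℝ) (u / t)) = (Ioi t).indicator 1 := by
    ext u; simp [indicator, lt_div_iff₀ ht]
  rw [this, integral_indicator_one measurableSet_Ioi]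

namespace HasTailLimit

variable {ν : Measure ℝ} [IsFiniteMeasure ν] {K a : ℝ} {f : ℝ → ℝ}

lemma eventually_lt_rpow_mul_measureReal_Ioi (hf : HasTailLimit ν α K f)
    (hν : ∀ᵐ u ∂ν, 0 ≤ u) (hle : ∀ v, 0 ≤ v → f v ≤ (Ioi 1).indicator 1 v)
    (ha : a < K * weightedIntegral α f) : ∀ᶠ t in atTop, a < t ^ α * ν.real (Ioi t) := by
  filter_upwards [hf.tendsto.eventually (lt_mem_nhds ha), eventually_gt_atTop 0] with t h ht
  refine h.trans_le (mul_le_mul_of_nonneg_left ?_ (by positivity))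
  rw [← integral_indicator_Ioi_one_comp_div ν ht]
  refine integral_mono_ae (hf.integrable_comp_div t) (integrable_indicator_Ioi_one_comp_div ν t) ?_
  filter_upwards [hν] with u hu using hle _ (div_nonneg hu ht.le)

lemma eventually_rpow_mul_measureReal_Ioi_lt (hf : HasTailLimit ν α K f)
    (hν : ∀ᵐ u ∂ν, 0 ≤ u) (hle : ∀ v, 0 ≤ v → (Ioi 1).indicator 1 v ≤ f v)
    (ha : K * weightedIntegral α f < a) : ∀ᶠ t in atTop, t ^ α * ν.real (Ioi t) < a := by
  filter_upwards [hf.tendsto.eventually (gt_mem_nhds ha), eventually_gt_atTop 0] with t h ht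
  refine (mul_le_mul_of_nonneg_left ?_ (by positivity)).trans_lt h
  rw [← integral_indicator_Ioi_one_comp_div ν ht]
  refine integral_mono_ae (integrable_indicator_Ioi_one_comp_div ν t) (hf.integrable_comp_div t) ?_
  filter_upwards [hν] with u hu using hle _ (div_nonneg hu ht.le)

end HasTailLimit

theorem tendsto_rpow_mul_measureReal_Ioi {ν : Measure ℝ} [IsFiniteMeasure ν] {K : ℝ}
    (hν : ∀ᵐ u ∂ν, 0 ≤ u) (hα : 0 < α) (hK : 0 ≤ K)
    (hG : ∀ a, 0 < a → HasTailLimit ν α K (kernel a)) :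
    Tendsto (fun t => t ^ α * ν.real (Ioi t)) atTop (𝓝 (K / α)) := by
  have hramp : ∀ b₁ b₂ : ℝ, 0 < b₁ → b₁ < b₂ →
      HasTailLimit ν α K (fun v => ramp (kernel 1 b₁) (kernel 1 b₂) (kernel 1 v)) := by
    intro b₁ b₂ hb₁ hb
    have hc₁ := kernel_one_pos hb₁.ne'
    have hc := strictMonoOn_kernel_one (le_of_lt hb₁) (hb₁.trans hb).le hb
    convert hasTailLimit_kernel_one_mul_comp hG (continuous_ramp_div_max (c₂ := kernel 1 b₂) hc₁)
      using 2 with v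
    exact ramp_eq_mul hc₁ hc
  have hcont : Tendsto (fun b : ℝ => K * (b ^ (-α) / α)) (𝓝 1) (𝓝 (K / α)) := by
    have := ((Real.continuousAt_rpow_const 1 (-α) (Or.inl one_ne_zero)).div_const α).const_mul K
    simpa [ContinuousAt, div_eq_mul_inv] using this
  refine tendsto_order.2 ⟨fun a ha => ?_, fun a ha => ?_⟩
  · obtain ⟨b, hab, hb⟩ : ∃ b : ℝ, a < K * (b ^ (-α) / α) ∧ 1 < b :=
      ((hcont.eventually (lt_mem_nhds ha)).filter_mono nhdsWithin_le_nhds |>.and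
        (self_mem_nhdsWithin (s := Ioi 1))).exists
    have hf := hramp 1 b one_pos hb
    refine hf.eventually_lt_rpow_mul_measureReal_Ioi hν
      (fun v hv => ramp_kernel_one_le_indicator_Ioi one_pos hb hv) (hab.trans_le ?_)
    exact mul_le_mul_of_nonneg_left (rpow_neg_div_le_weightedIntegral hα (one_pos.trans hb)
      hf.integrableOn fun v hv => indicator_Ioi_le_ramp_kernel_one one_pos hb hv.le) hK
  · obtain ⟨b, ⟨hab, hb₀⟩, hb⟩ : ∃ b : ℝ, (K * (b ^ (-α) / α) < a ∧ 0 < b) ∧ b < 1 :=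
      ((hcont.eventually (gt_mem_nhds ha)).and (lt_mem_nhds one_pos) |>.filter_mono
        nhdsWithin_le_nhds |>.and (self_mem_nhdsWithin (s := Iio 1))).exists
    have hf := hramp b 1 hb₀ hb
    refine hf.eventually_rpow_mul_measureReal_Ioi_lt hν
      (fun v hv => indicator_Ioi_le_ramp_kernel_one hb₀ hb hv) (hab.trans_le' ?_)
    exact mul_le_mul_of_nonneg_left (weightedIntegral_le_rpow_neg_div hα hb₀
      hf.integrableOn fun v hv => ramp_kernel_one_le_indicator_Ioi hb₀ hb hv.le) hK

lemma weightedIntegral_kernel_one (α : ℝ) :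
    weightedIntegral α (kernel 1) = ∫ v in Ioi 0, v ^ (1 - α) / (1 + v ^ 2) :=
  setIntegral_congr_fun measurableSet_Ioi fun _ hv => kernel_one_mul_rpow hv α

lemma weightedIntegral_kernel_one_pos (hα0 : 0 < α) (hα2 : α < 2) :
    0 < weightedIntegral α (kernel 1) := by
  have hpos : ∀ v ∈ Ioi (0 : ℝ), 0 < kernel 1 v * v ^ (-α - 1) := fun v (hv : 0 < v) =>
    mul_pos (kernel_one_pos hv.ne') (by positivity)
  rw [weightedIntegral, setIntegral_pos_iff_support_of_nonneg_ae
    ((ae_restrict_iff' measurableSet_Ioi).2 (ae_of_all _ fun v hv => (hpos v hv).le))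
    (integrableOn_kernel_one_mul_rpow hα0 hα2)]
  exact lt_of_lt_of_le (by simp) (measure_mono fun v hv => ⟨(hpos v hv).ne', hv⟩)

lemma integral_div_sq_add_sq_sub_inv (μ : Measure ℝ) [IsProbabilityMeasure μ] (t : ℝ) :
    ∫ x, t / (t ^ 2 + x ^ 2) ∂μ - t⁻¹ = -(t⁻¹ * ∫ x, kernel 1 (x / t) ∂μ) := by
  rcases eq_or_ne t 0 with rfl | ht
  · simp
  have : ∀ x, t / (t ^ 2 + x ^ 2) = t⁻¹ * (1 - kernel 1 (x / t)) := fun x => by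
    have : 0 < t ^ 2 + x ^ 2 := by positivity
    simp only [kernel, div_pow]
    field_simp
    ring
  simp_rw [this]
  rw [integral_const_mul, integral_sub (integrable_const 1)
    (integrable_comp_div_of_abs_le (measurable_kernel 1) (abs_kernel_le zero_le_one) t)]
  simp only [integral_const, probReal_univ, smul_eq_mul, one_mul]
  ring

lemma tendsto_rpow_mul_integral_kernel_one {μ : Measure ℝ} [IsProbabilityMeasure μ] {D : ℝ}
    (hD : D ≠ 0) (h : Tendsto (fun t => (∫ x, t / (t ^ 2 + x ^ 2) ∂μ - t⁻¹) /
      (-(D * t ^ (-α - 1)))) atTop (𝓝 1)) :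
    Tendsto (fun t => t ^ α * ∫ x, kernel 1 (x / t) ∂μ) atTop (𝓝 D) := by
  rw [← mul_one D]
  refine (h.const_mul D).congr' ((eventually_gt_atTop 0).mono fun t ht => ?_)
  rw [integral_div_sq_add_sq_sub_inv, show -α - 1 = -α + -1 by ring, Real.rpow_add ht,
    Real.rpow_neg ht.le, Real.rpow_neg_one]
  field_simp

lemma measureReal_map_abs_Ioi {μ : Measure ℝ} [IsFiniteMeasure μ]
    (hsymm : μ.map (fun x => -x) = μ) {t : ℝ} (ht : 0 ≤ t) :
    (μ.map (fun x => |x|)).real (Ioi t) = 2 * μ.real (Ioi t) := by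
  have hpre : (fun x : ℝ => |x|) ⁻¹' Ioi t = Ioi t ∪ Iio (-t) := by
    ext x; simp only [mem_preimage, mem_Ioi, mem_union, mem_Iio, lt_abs, lt_neg]
  have hneg : μ.real (Iio (-t)) = μ.real (Ioi t) := by
    conv_rhs => rw [← hsymm]
    rw [map_measureReal_apply measurable_neg measurableSet_Ioi]
    simp
  rw [map_measureReal_apply measurable_abs measurableSet_Ioi, hpre,
    measureReal_union (Ioi_disjoint_Iio_of_le (by linarith)) measurableSet_Iio, hneg]
  ring

end Tauberian

open Tauberian

/-- **Tauberian-type implication.** Let `μ` be a symmetric probability measure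
on `ℝ`, `0 < α < 2`, `c > 0`. If `Im m_μ(it) − t^{-1} ∼ −Δ(α) c t^{-α-1}` as `t → +∞`, where
`Δ(α) = 2α ∫_0^∞ x^{1-α}/(1+x²) dx` and `Im m_μ(it) = ∫ t/(t²+x²) μ(dx)`, then
`μ((t,∞)) ∼ c t^{-α}` as `t → +∞`. -/
theorem stmt10 (μ : Measure ℝ) [IsProbabilityMeasure μ]
    (hsymm : Measure.map (fun x => -x) μ = μ)
    (α : ℝ) (hα0 : 0 < α) (hα2 : α < 2) (c : ℝ) (hc : 0 < c)
    (hyp : Tendsto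
      (fun t : ℝ => ((∫ x, t / (t ^ 2 + x ^ 2) ∂μ) - t⁻¹) /
        (-((2 * α * ∫ x in Set.Ioi (0:ℝ), x ^ (1 - α) / (1 + x ^ 2)) * c * t ^ (-α - 1))))
      atTop (nhds 1)) :
    Tendsto (fun t : ℝ => (μ (Set.Ioi t)).toReal / (c * t ^ (-α))) atTop (nhds 1) := by
  set ν := μ.map (fun x => |x|)
  have hW := weightedIntegral_kernel_one_pos hα0 hα2
  rw [← weightedIntegral_kernel_one] at hyp
  have hG₁ : HasTailLimit ν α (2 * c * α) (kernel 1) := by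
    refine ⟨measurable_kernel 1, ⟨1, abs_kernel_le zero_le_one⟩,
      integrableOn_kernel_one_mul_rpow hα0 hα2, ?_⟩
    convert tendsto_rpow_mul_integral_kernel_one (by positivity) hyp using 2 with t
    · rw [integral_map measurable_abs.aemeasurable
        (by fun_prop : Measurable fun u => kernel 1 (u / t)).aestronglyMeasurable]
      simp only [kernel_div_abs]
    · ring
  have hG (a : ℝ) (ha : 0 < a) : HasTailLimit ν α (2 * c * α) (kernel a) :=
    kernel_comp_div_sqrt ha ▸ hG₁.comp_div (Real.sqrt_pos.2 ha)
  have hν : ∀ᵐ u ∂ν, 0 ≤ u :=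
    (ae_map_iff measurable_abs.aemeasurable measurableSet_Ici).2 (ae_of_all _ abs_nonneg)
  have htail := (tendsto_rpow_mul_measureReal_Ioi hν hα0 (by positivity) hG).div_const (2 * c)
  rw [mul_div_cancel_right₀ _ hα0.ne', div_self (by positivity)] at htail
  refine htail.congr' ((eventually_gt_atTop 0).mono fun t ht => ?_)
  dsimp only
  rw [measureReal_map_abs_Ioi hsymm ht.le, Real.rpow_neg ht.le, measureReal_def]
  field_simp
end

section
/- Let T be a densely defined symmetric operator on ℓ²(V) for a countable set V whose skeleton (the graph with an edge between u,v whenever ⟨δ_u , T δ_v⟩ ≠ 0) is a tree, and suppose there exist κ > 0 and an increasing sequence of finite connected subsets S_n ⊆ V exhausting V such that for every n and every v ∈ S_n, Σ_{u ∉ S_n, u ∼ v} |⟨δ_v, T δ_u⟩|² ≤ κ. Then T is essentially self-adjoint. -/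
/-!
If `T* φ = c φ` with `Im c ≠ 0`, pair the equation with `φ` restricted to `S n`: the part of the
hermitian form inside `S n` is real, so `Im c · ‖φ|S n‖²` equals the imaginary part of the
boundary term `⟨φ 1_{S n}, T (φ 1_{(S n)ᶜ})⟩`. Since the skeleton is a tree and `S n` is connected,
every vertex outside `S n` has at most one neighbour in `S n`, and Cauchy–Schwarz bounds the
square of the boundary term by `κ ‖φ|S n‖² · ‖φ|(S n)ᶜ‖²`. Letting `n → ∞`, the first factor tends
to `‖φ‖²` and the second to `0`, so `(Im c)² ‖φ‖⁴ ≤ 0`.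
-/

open Filter

namespace SimpleGraph

variable {V : Type*} {G : SimpleGraph V}

theorem IsAcyclic.subsingleton_neighborSet_inter (hG : G.IsAcyclic) {s : Set V}
    (hs : (G.induce s).Preconnected) {u : V} (hu : u ∉ s) :
    (G.neighborSet u ∩ s).Subsingleton := by
  classical
  rintro v₁ ⟨hv₁u : G.Adj u v₁, hv₁⟩ v₂ ⟨hv₂u : G.Adj u v₂, hv₂⟩
  by_contra hne
  obtain ⟨p⟩ := hs ⟨v₁, hv₁⟩ ⟨v₂, hv₂⟩
  let q : G.Walk v₁ v₂ := p.map (Embedding.induce s).toHom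
  have hq : ∀ x ∈ q.support, x ∈ s := by
    rintro x hx
    obtain ⟨y, -, rfl⟩ := List.mem_map.mp (p.support_map _ ▸ hx)
    exact y.2
  -- the path `v₁ - u - v₂` through the outside vertex must coincide with the path inside `s`
  let r : G.Path v₁ v₂ := ⟨.cons hv₁u.symm (.cons hv₂u .nil), by
    simp [Walk.cons_isPath_iff, hne, hv₁u.ne', hv₂u.ne]⟩
  have hur : u ∈ (r : G.Walk v₁ v₂).support := by simp [r]
  rw [(hG.subsingleton_path v₁ v₂).elim r q.toPath] at hur
  exact hu (hq u (q.support_toPath_subset_support hur))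

end SimpleGraph

theorem tsum_mul_sq_le_sq_mul_sq {ι : Type*} {f g : ι → ℝ} (hf : ∀ i, 0 ≤ f i) (hg : ∀ i, 0 ≤ g i)
    (hf_sum : Summable fun i => f i ^ 2) (hg_sum : Summable fun i => g i ^ 2) :
    (∑' i, f i * g i) ^ 2 ≤ (∑' i, f i ^ 2) * ∑' i, g i ^ 2 := by
  have h := Real.inner_le_Lp_mul_Lq_tsum_of_nonneg Real.HolderConjugate.two_two hf hg
    (by simpa using hf_sum) (by simpa using hg_sum)
  simp only [Real.rpow_two, ← Real.sqrt_eq_rpow] at h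
  have hF : 0 ≤ ∑' i, f i ^ 2 := tsum_nonneg fun i => sq_nonneg _
  have hG : 0 ≤ ∑' i, g i ^ 2 := tsum_nonneg fun i => sq_nonneg _
  rw [← Real.sqrt_mul hF] at h
  exact (Real.le_sqrt (tsum_nonneg fun i => mul_nonneg (hf i) (hg i)) (mul_nonneg hF hG)).mp h

theorem Finset.sum_pow_eq_sum_pow_of_subsingleton {ι R : Type*} [CommSemiring R] {s : Finset ι}
    {f : ι → R} (hf : {i | i ∈ s ∧ f i ≠ 0}.Subsingleton) {n : ℕ} (hn : n ≠ 0) :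
    (∑ i ∈ s, f i) ^ n = ∑ i ∈ s, f i ^ n := by
  by_cases h : ∃ i ∈ s, f i ≠ 0
  · obtain ⟨i, hi, hfi⟩ := h
    have hzero : ∀ j ∈ s, j ≠ i → f j = 0 := fun j hj hji =>
      by_contra fun hfj => hji (hf ⟨hj, hfj⟩ ⟨hi, hfi⟩)
    rw [sum_eq_single_of_mem i hi hzero,
      sum_eq_single_of_mem i hi fun j hj hji => by rw [hzero j hj hji, zero_pow hn]]
  · push Not at h
    rw [sum_eq_zero h, sum_eq_zero fun i hi => by rw [h i hi, zero_pow hn], zero_pow hn]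

theorem tsum_subtype_notMem_eq_tsum_ite {ι α : Type*} [AddCommMonoid α] [TopologicalSpace α]
    [DecidableEq ι] (s : Finset ι) (f : ι → α) :
    ∑' i : {i // i ∉ s}, f i = ∑' i, if i ∈ s then 0 else f i :=
  (tsum_subtype {i | i ∉ s} f).trans (tsum_congr fun i => by simp [Set.indicator_apply])

section DeficiencyEquation

open ComplexConjugate

variable {V : Type*} {w : V → V → ℂ} {φ : V → ℂ} {c : ℂ}

theorem im_sum_sum_conj_mul_mul_eq_zero (hherm : ∀ u v, w u v = conj (w v u)) (s : Finset V) :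
    (∑ v ∈ s, ∑ u ∈ s, conj (φ v) * (w v u * φ u)).im = 0 := by
  refine Complex.conj_eq_iff_im.mp ?_
  simp only [map_sum, map_mul, Complex.conj_conj]
  rw [Finset.sum_comm]
  refine Finset.sum_congr rfl fun v _ => Finset.sum_congr rfl fun u _ => ?_
  rw [← hherm]
  ring

theorem im_mul_sum_norm_sq_eq_im_boundary (hherm : ∀ u v, w u v = conj (w v u))
    (hφ : ∀ v, HasSum (fun u => w v u * φ u) (c * φ v)) (s : Finset V) :
    c.im * ∑ v ∈ s, ‖φ v‖ ^ 2 =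
      (∑ v ∈ s, ∑' u : {u // u ∉ s}, conj (φ v) * (w v u * φ u)).im := by
  have hsplit : ∀ v, conj (φ v) * (c * φ v) = ∑ u ∈ s, conj (φ v) * (w v u * φ u) +
      ∑' u : {u // u ∉ s}, conj (φ v) * (w v u * φ u) := fun v => by
    rw [← (hφ v).tsum_eq, ← ((hφ v).summable.sum_add_tsum_subtype_compl s), mul_add,
      Finset.mul_sum, tsum_mul_left]
  have htotal : c * ((∑ v ∈ s, ‖φ v‖ ^ 2 : ℝ) : ℂ) = ∑ v ∈ s, conj (φ v) * (c * φ v) := by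
    push_cast
    rw [Finset.mul_sum]
    exact Finset.sum_congr rfl fun v _ => by rw [mul_left_comm, Complex.conj_mul']
  have him := congrArg Complex.im htotal
  rw [Finset.sum_congr rfl fun v _ => hsplit v, Finset.sum_add_distrib, Complex.add_im,
    im_sum_sum_conj_mul_mul_eq_zero hherm, zero_add, Complex.mul_im, Complex.ofReal_im,
    Complex.ofReal_re, mul_zero, zero_add] at him
  exact him

theorem norm_boundary_le (hsum : ∀ v, Summable fun u => w v u * φ u) (s : Finset V) :
    ‖∑ v ∈ s, ∑' u : {u // u ∉ s}, conj (φ v) * (w v u * φ u)‖ ≤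
      ∑' u : {u // u ∉ s}, (∑ v ∈ s, ‖φ v‖ * ‖w v u‖) * ‖φ u‖ := by
  have hnorm : ∀ v, Summable fun u : {u // u ∉ s} => ‖φ v‖ * (‖w v u‖ * ‖φ u‖) := fun v => by
    simpa only [Function.comp_apply, norm_mul, Complex.norm_conj] using
      (((hsum v).mul_left (conj (φ v))).subtype (· ∉ s)).norm
  calc ‖∑ v ∈ s, ∑' u : {u // u ∉ s}, conj (φ v) * (w v u * φ u)‖
      ≤ ∑ v ∈ s, ∑' u : {u // u ∉ s}, ‖φ v‖ * (‖w v u‖ * ‖φ u‖) := by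
        refine (norm_sum_le _ _).trans (Finset.sum_le_sum fun v _ => ?_)
        refine (norm_tsum_le_tsum_norm ?_).trans_eq (by simp only [norm_mul, Complex.norm_conj])
        simpa only [norm_mul, Complex.norm_conj] using hnorm v
    _ = ∑' u : {u // u ∉ s}, (∑ v ∈ s, ‖φ v‖ * ‖w v u‖) * ‖φ u‖ := by
        rw [← Summable.tsum_finsetSum fun v _ => hnorm v]
        simp only [Finset.sum_mul, mul_assoc]

theorem sq_im_mul_sum_norm_sq_le (hherm : ∀ u v, w u v = conj (w v u))
    (hrow : ∀ v, Summable fun u => ‖w v u‖ ^ 2) (hφ2 : Summable fun v => ‖φ v‖ ^ 2)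
    (hφ : ∀ v, HasSum (fun u => w v u * φ u) (c * φ v)) (s : Finset V)
    (hsingle : ∀ u ∉ s, {v | v ∈ s ∧ w v u ≠ 0}.Subsingleton) :
    (c.im * ∑ v ∈ s, ‖φ v‖ ^ 2) ^ 2 ≤
      (∑ v ∈ s, ‖φ v‖ ^ 2 * ∑' u : {u // u ∉ s}, ‖w v u‖ ^ 2) * ∑' u : {u // u ∉ s}, ‖φ u‖ ^ 2 := by
  set a : {u // u ∉ s} → ℝ := fun u => ∑ v ∈ s, ‖φ v‖ * ‖w v u‖
  -- a vertex outside `s` is linked to at most one vertex of `s`, so `a u ^ 2` has no cross terms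
  have ha_sq : ∀ u, a u ^ 2 = ∑ v ∈ s, ‖φ v‖ ^ 2 * ‖w v u‖ ^ 2 := fun u => by
    refine (Finset.sum_pow_eq_sum_pow_of_subsingleton ((hsingle u u.2).anti ?_) two_ne_zero).trans
      (Finset.sum_congr rfl fun v _ => mul_pow _ _ _)
    rintro v ⟨hv, hvu⟩
    exact ⟨hv, fun hw => hvu (by rw [hw, norm_zero, mul_zero])⟩
  have hrow_s : ∀ v, Summable fun u : {u // u ∉ s} => ‖φ v‖ ^ 2 * ‖w v u‖ ^ 2 := fun v =>
    ((hrow v).subtype (· ∉ s)).mul_left _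
  have ha_sum : Summable fun u => a u ^ 2 := by
    simpa only [ha_sq] using summable_sum fun v _ => hrow_s v
  have hboundary := norm_boundary_le (fun v => (hφ v).summable) s
  rw [im_mul_sum_norm_sq_eq_im_boundary hherm hφ s]
  calc _ ≤ ‖∑ v ∈ s, ∑' u : {u // u ∉ s}, conj (φ v) * (w v u * φ u)‖ ^ 2 := by
        rw [← sq_abs]
        exact pow_le_pow_left₀ (abs_nonneg _) (Complex.abs_im_le_norm _) 2
    _ ≤ (∑' u, a u * ‖φ u‖) ^ 2 := pow_le_pow_left₀ (norm_nonneg _) hboundary 2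
    _ ≤ (∑' u, a u ^ 2) * ∑' u : {u // u ∉ s}, ‖φ u‖ ^ 2 :=
        tsum_mul_sq_le_sq_mul_sq (fun u => Finset.sum_nonneg fun v _ => by positivity)
          (fun u => norm_nonneg _) ha_sum (hφ2.subtype (· ∉ s))
    _ = _ := by
        rw [tsum_congr ha_sq, Summable.tsum_finsetSum fun v _ => hrow_s v]
        simp only [tsum_mul_left]

theorem eq_zero_of_hasSum_eq_mul_of_im_ne_zero {G : SimpleGraph V} (hG : G.IsAcyclic)
    (hherm : ∀ u v, w u v = conj (w v u)) (hskel : ∀ u v, w u v ≠ 0 → G.Adj u v)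
    (hrow : ∀ v, Summable fun u => ‖w v u‖ ^ 2) {κ : ℝ} {S : ℕ → Finset V} (hS : Monotone S)
    (hexh : ∀ v, ∃ n, v ∈ S n) (hconn : ∀ n, (G.induce (S n : Set V)).Preconnected)
    (hbdry : ∀ n, ∀ v ∈ S n, ∑' u : {u // u ∉ S n}, ‖w v u‖ ^ 2 ≤ κ)
    (hφ2 : Summable fun v => ‖φ v‖ ^ 2) (hc : c.im ≠ 0)
    (hφ : ∀ v, HasSum (fun u => w v u * φ u) (c * φ v)) : φ = 0 := by
  set M : ℕ → ℝ := fun n => ∑ v ∈ S n, ‖φ v‖ ^ 2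
  set t : ℕ → ℝ := fun n => ∑' u : {u // u ∉ S n}, ‖φ u‖ ^ 2
  have hsingle : ∀ n, ∀ u ∉ S n, {v | v ∈ S n ∧ w v u ≠ 0}.Subsingleton := fun n u hu =>
    (hG.subsingleton_neighborSet_inter (hconn n) hu).anti fun v ⟨hv, hw⟩ =>
      ⟨(hskel v u hw).symm, hv⟩
  have hrow_bound :
      ∀ n, ∑ v ∈ S n, ‖φ v‖ ^ 2 * ∑' u : {u // u ∉ S n}, ‖w v u‖ ^ 2 ≤ κ * M n := fun n => by
    rw [Finset.mul_sum]
    exact Finset.sum_le_sum fun v hv => by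
      rw [mul_comm κ]
      exact mul_le_mul_of_nonneg_left (hbdry n v hv) (sq_nonneg _)
  have key : ∀ n, (c.im * M n) ^ 2 ≤ κ * M n * t n := fun n =>
    (sq_im_mul_sum_norm_sq_le hherm hrow hφ2 hφ (S n) (hsingle n)).trans
      (mul_le_mul_of_nonneg_right (hrow_bound n) (tsum_nonneg fun _ => sq_nonneg _))
  have hS_atTop : Tendsto S atTop atTop := tendsto_atTop_finset_of_monotone hS hexh
  have hM : Tendsto M atTop (nhds (∑' v, ‖φ v‖ ^ 2)) := hφ2.hasSum.comp hS_atTop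
  have ht : Tendsto t atTop (nhds 0) :=
    (tendsto_tsum_compl_atTop_zero fun u => ‖φ u‖ ^ 2).comp hS_atTop
  have hlim := le_of_tendsto_of_tendsto' ((hM.const_mul c.im).pow 2) ((hM.const_mul κ).mul ht) key
  have hT : ∑' v, ‖φ v‖ ^ 2 = 0 := by
    rw [mul_zero] at hlim
    simpa [hc] using pow_eq_zero_iff two_ne_zero |>.mp (le_antisymm hlim (sq_nonneg _))
  funext v
  simpa [hT] using hφ2.le_tsum v fun _ _ => sq_nonneg _

end DeficiencyEquation

theorem stmt11_general {V : Type*} [DecidableEq V]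
    (G : SimpleGraph V) (htree : G.IsTree)
    (w : V → V → ℂ)
    (hherm : ∀ u v, w u v = starRingEnd ℂ (w v u))
    (hskel : ∀ u v, w u v ≠ 0 ↔ G.Adj u v)
    (hrow : ∀ v, Summable (fun u => ‖w v u‖ ^ 2))
    (κ : ℝ)
    (S : ℕ → Finset V)
    (hmono : ∀ n, S n ⊆ S (n + 1))
    (hexh : ∀ v, ∃ n, v ∈ S n)
    (hconn : ∀ n, (G.induce (↑(S n) : Set V)).Connected)
    (hbdry : ∀ n, ∀ v ∈ S n, ∑' u : V, (if u ∈ S n then 0 else ‖w v u‖ ^ 2) ≤ κ) :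
    ∀ φ : V → ℂ, Summable (fun v => ‖φ v‖ ^ 2) →
      ((∀ v, HasSum (fun u => w v u * φ u) (Complex.I * φ v)) → φ = 0) ∧
      ((∀ v, HasSum (fun u => w v u * φ u) (-Complex.I * φ v)) → φ = 0) := by
  intro φ hφ2
  have hbdry' : ∀ n, ∀ v ∈ S n, ∑' u : {u // u ∉ S n}, ‖w v u‖ ^ 2 ≤ κ := fun n v hv =>
    (tsum_subtype_notMem_eq_tsum_ite (S n) _).trans_le (hbdry n v hv)
  have h_im_ne_zero : ∀ c : ℂ, c.im ≠ 0 → (∀ v, HasSum (fun u => w v u * φ u) (c * φ v)) → φ = 0 :=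
    fun c hc => eq_zero_of_hasSum_eq_mul_of_im_ne_zero htree.isAcyclic hherm
      (fun u v => (hskel u v).mp) hrow (monotone_nat_of_le_succ hmono) hexh
      (fun n => (hconn n).preconnected) hbdry' hφ2 hc
  exact ⟨h_im_ne_zero _ (by simp), h_im_ne_zero _ (by simp)⟩

/-- **criterion of essential self-adjointness on a tree.** Let `T` be a densely
defined symmetric operator on `ℓ²(V)` (`V` countable), given by matrix elements
`w u v = ⟨δ_u, T δ_v⟩` with hermitian symmetry and square-summable rows, whose skeleton
(the graph with an edge `{u,v}` whenever `w u v ≠ 0`) is a tree `G`. Suppose there exist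
`κ > 0` and an increasing sequence of finite connected subsets `S n ⊆ V` exhausting `V` such
that for every `n` and `v ∈ S n`, `Σ_{u ∉ S n} |w v u|² ≤ κ`. Then `T` is essentially
self-adjoint: the deficiency equations `T* φ = ± i φ` have only the solution `φ = 0` in
`ℓ²(V)`. -/
theorem stmt11 {V : Type*} [Countable V] [DecidableEq V]
    (G : SimpleGraph V) (htree : G.IsTree)
    (w : V → V → ℂ)
    (hherm : ∀ u v, w u v = starRingEnd ℂ (w v u))
    (hskel : ∀ u v, w u v ≠ 0 ↔ G.Adj u v)
    (hrow : ∀ v, Summable (fun u => ‖w v u‖ ^ 2))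
    (κ : ℝ) (hκ : 0 < κ)
    (S : ℕ → Finset V)
    (hmono : ∀ n, S n ⊆ S (n + 1))
    (hexh : ∀ v, ∃ n, v ∈ S n)
    (hconn : ∀ n, (G.induce (↑(S n) : Set V)).Connected)
    (hbdry : ∀ n, ∀ v ∈ S n, ∑' u : V, (if u ∈ S n then 0 else ‖w v u‖ ^ 2) ≤ κ) :
    ∀ φ : V → ℂ, Summable (fun v => ‖φ v‖ ^ 2) →
      ((∀ v, HasSum (fun u => w v u * φ u) (Complex.I * φ v)) → φ = 0) ∧
      ((∀ v, HasSum (fun u => w v u * φ u) (-Complex.I * φ v)) → φ = 0) :=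
  stmt11_general G htree w hherm hskel hrow κ S hmono hexh hconn hbdry
end

section
/- Let κ > 0, 0 < α < 2, and let 0 < x_1 < x_2 < ⋯ be a unit-rate Poisson process on (0,∞). Define τ_κ = inf{t ∈ ℕ : Σ_{k ≥ t+1} x_k^{-2/α} ≤ κ}. Then E[τ_κ] < ∞, and E[τ_κ] → 0 as κ → ∞. -/
open MeasureTheory ProbabilityTheory Filter Set Topology
open scoped ENNReal

/-!
Let `S m = E₀ + ⋯ + E_{m-1}` and call `m` bad when `S m ≤ m / 2`. Since `𝔼 e^{-E_j} = 1/2`, the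
Chernoff bound gives `ℙ(m bad) ≤ (√e / 2)^m`, a geometric rate, so `G = ∑ₘ m · 1{m bad}` is
integrable. Every `m > G` is good, so beyond `G` the terms `S m ^ (-2/α)` are dominated by the
summable `(m / 2) ^ (-2/α)`; hence `τ_κ ≤ N_κ + G` for a deterministic `N_κ` that also works
for every larger `κ`. Finally `τ_κ = 0` as soon as `κ` exceeds the whole sum, and dominated
convergence with the bound `N_1 + G` gives `𝔼 τ_κ → 0`.
-/

theorem measurable_sInf_setOf_mem {Ω : Type*} [MeasurableSpace Ω] {B : ℕ → Set Ω}
    (hB : ∀ t, MeasurableSet (B t)) :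
    Measurable fun ω => sInf {t | ω ∈ B t} := by
  classical
  have hex : ∀ ω, ∃ t, ω ∈ B t ∨ ω ∉ ⋃ t, B t := fun ω => by
    by_cases h : ω ∈ ⋃ t, B t
    · obtain ⟨t, ht⟩ := mem_iUnion.1 h
      exact ⟨t, .inl ht⟩
    · exact ⟨0, .inr h⟩
  convert measurable_find hex fun t => (hB t).union (MeasurableSet.iUnion hB).compl using 1
  funext ω
  by_cases h : ω ∈ ⋃ t, B t
  · have hne : {t | ω ∈ B t}.Nonempty := mem_iUnion.1 h
    rw [Nat.sInf_def hne]
    simp only [h, not_true_eq_false, or_false]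
  · have hemp : {t | ω ∈ B t} = ∅ :=
      eq_empty_iff_forall_notMem.2 fun t ht => h (mem_iUnion.2 ⟨t, ht⟩)
    rw [hemp, Nat.sInf_empty, eq_comm, Nat.find_eq_zero]
    exact .inr h

noncomputable def tailIndex (s : ℕ → ℝ) (p κ : ℝ) : ℕ :=
  sInf {t : ℕ | ∑' k, s (t + k + 1) ^ (-p) ≤ κ}

section TailIndex

variable {s : ℕ → ℝ} {p κ : ℝ}

theorem tailIndex_eq_zero_of_tsum_le (hκ : ∑' k, s (k + 1) ^ (-p) ≤ κ) : tailIndex s p κ = 0 :=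
  Nat.le_zero.1 (Nat.sInf_le (by simpa using hκ))

theorem tendsto_tailIndex_atTop (s : ℕ → ℝ) (p : ℝ) :
    Tendsto (fun κ => (tailIndex s p κ : ℝ)) atTop (𝓝 0) :=
  tendsto_const_nhds.congr' <| (eventually_ge_atTop (∑' k, s (k + 1) ^ (-p))).mono fun κ hκ => by
    simp [tailIndex_eq_zero_of_tsum_le hκ]

theorem tsum_rpow_le_tsum_half_rpow (hp : 1 < p) {t : ℕ} (hs : ∀ m : ℕ, t < m → (m : ℝ) / 2 < s m) :
    ∑' k, s (t + k + 1) ^ (-p) ≤ ∑' k : ℕ, (((t + k + 1 : ℕ) : ℝ) / 2) ^ (-p) := by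
  have hb : Summable fun m : ℕ => ((m : ℝ) / 2) ^ (-p) := by
    simpa [div_eq_mul_inv, Real.mul_rpow] using
      (Real.summable_nat_rpow.2 (neg_lt_neg hp)).mul_right ((2 : ℝ)⁻¹ ^ (-p))
  have hb' : Summable fun k : ℕ => (((t + k + 1 : ℕ) : ℝ) / 2) ^ (-p) :=
    ((summable_nat_add_iff (t + 1)).2 hb).congr fun k => by rw [add_right_comm, add_comm k]
  have hle : ∀ k : ℕ, s (t + k + 1) ^ (-p) ≤ (((t + k + 1 : ℕ) : ℝ) / 2) ^ (-p) := fun k =>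
    Real.rpow_le_rpow_of_nonpos (by positivity) (hs _ (by omega)).le (by linarith)
  have h0 : ∀ k : ℕ, 0 ≤ s (t + k + 1) ^ (-p) := fun k =>
    Real.rpow_nonneg ((by positivity : (0 : ℝ) ≤ _).trans (hs (t + k + 1) (by omega)).le) _
  exact (hb'.of_nonneg_of_le h0 hle).tsum_le_tsum hle hb'

theorem exists_tailIndex_le (hp : 1 < p) (hκ : 0 < κ) :
    ∃ N : ℕ, ∀ κ' ≥ κ, ∀ (s : ℕ → ℝ) (g : ℝ), 0 ≤ g →
      (∀ m : ℕ, g < m → (m : ℝ) / 2 < s m) → (tailIndex s p κ' : ℝ) ≤ N + g := by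
  have htail : Tendsto (fun t : ℕ => ∑' k : ℕ, (((t + k + 1 : ℕ) : ℝ) / 2) ^ (-p)) atTop (𝓝 0) :=
    ((tendsto_sum_nat_add fun m : ℕ => ((m : ℝ) / 2) ^ (-p)).comp (tendsto_add_atTop_nat 1)).congr
      fun t => tsum_congr fun k => by
        simp only [show k + (t + 1) = t + k + 1 by omega]
  obtain ⟨N, hN⟩ := eventually_atTop.1 (htail.eventually_le_const hκ)
  refine ⟨N, fun κ' hκ' s g hg hs => ?_⟩
  have hgood : ∀ m : ℕ, max N ⌊g⌋₊ < m → (m : ℝ) / 2 < s m := fun m hm =>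
    hs m ((Nat.floor_lt hg).1 ((le_max_right _ _).trans_lt hm))
  have hmem : max N ⌊g⌋₊ ∈ {t : ℕ | ∑' k, s (t + k + 1) ^ (-p) ≤ κ'} :=
    (tsum_rpow_le_tsum_half_rpow hp hgood).trans ((hN _ (le_max_left _ _)).trans hκ')
  calc (tailIndex s p κ' : ℝ) ≤ (max N ⌊g⌋₊ : ℕ) := Nat.cast_le.2 (Nat.sInf_le hmem)
    _ ≤ N + g := by
      rw [Nat.cast_max]
      exact max_le (by linarith) (by linarith [Nat.floor_le hg, (Nat.cast_nonneg N : (0:ℝ) ≤ N)])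

theorem measurable_tailIndex {Ω : Type*} [MeasurableSpace Ω] {s : ℕ → Ω → ℝ}
    (hs : ∀ m, Measurable (s m)) (p κ : ℝ) : Measurable fun ω => tailIndex (fun m => s m ω) p κ :=
  measurable_sInf_setOf_mem fun _ =>
    measurableSet_le (Measurable.tsum fun _ => (hs _).pow_const _) measurable_const

end TailIndex

section ExponentialTail

open Real

variable {Ω : Type*} [MeasurableSpace Ω] {μ : Measure Ω}

theorem integrable_exp_neg_of_ae_nonneg [IsFiniteMeasure μ] {Y : Ω → ℝ} (hY : Measurable Y)
    (h0 : ∀ᵐ ω ∂μ, 0 ≤ Y ω) :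
    Integrable (fun ω => exp (-1 * Y ω)) μ :=
  (integrable_const 1).mono' (hY.const_mul _).exp.aestronglyMeasurable
    (h0.mono fun ω h => by rw [norm_of_nonneg (exp_pos _).le, exp_le_one_iff]; linarith)

variable [IsProbabilityMeasure μ] {X : Ω → ℝ}

theorem ae_pos_of_exp_tail (hX : Measurable X)
    (htail : ∀ t, 0 ≤ t → μ {ω | t < X ω} = ENNReal.ofReal (exp (-t))) :
    ∀ᵐ ω ∂μ, 0 < X ω := by
  rw [ae_iff_measure_eq (measurableSet_lt measurable_const hX).nullMeasurableSet, htail 0 le_rfl]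
  simp

theorem mgf_neg_one_of_exp_tail (hX : Measurable X)
    (htail : ∀ t, 0 ≤ t → μ {ω | t < X ω} = ENNReal.ofReal (exp (-t))) :
    mgf X μ (-1) = 2⁻¹ := by
  have hpos := ae_pos_of_exp_tail hX htail
  have hle : ∀ᵐ ω ∂μ, exp (-1 * X ω) ≤ 1 :=
    hpos.mono fun ω h => exp_le_one_iff.2 (by linarith)
  have hint := integrable_exp_neg_of_ae_nonneg hX (hpos.mono fun ω h => h.le)
  -- layer cake: `ℙ(exp (-X) ≥ t) = ℙ(X ≤ -log t) = 1 - t` on `(0, 1]`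
  have hlevel : ∀ t ∈ Ioc (0 : ℝ) 1, μ.real {ω | t ≤ exp (-1 * X ω)} = 1 - t := by
    rintro t ⟨ht0, ht1⟩
    have hset : {ω | t ≤ exp (-1 * X ω)} = {ω | -log t < X ω}ᶜ := by
      ext ω
      simp only [mem_ofPred_eq, mem_compl_iff, not_lt, ← log_le_iff_le_exp ht0]
      constructor <;> intro h <;> linarith
    rw [hset, measureReal_compl (measurableSet_lt measurable_const hX), probReal_univ,
      measureReal_def, htail _ (neg_nonneg.2 (log_nonpos ht0.le ht1)), neg_neg, exp_log ht0,
      ENNReal.toReal_ofReal ht0.le]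
  rw [mgf, hint.integral_eq_integral_Ioc_meas_le (ae_of_all _ fun ω => (exp_pos _).le) hle,
    setIntegral_congr_fun measurableSet_Ioc hlevel, ← intervalIntegral.integral_of_le zero_le_one,
    intervalIntegral.integral_sub intervalIntegrable_const intervalIntegral.intervalIntegrable_id,
    intervalIntegral.integral_const, integral_id]
  norm_num

theorem exp_inv_two_div_two_lt_one : exp 2⁻¹ / 2 < 1 := by
  rw [div_lt_one two_pos, ← lt_log_iff_exp_lt two_pos]
  linarith [log_two_gt_d9]

theorem measureReal_sum_le_half_le {E : ℕ → Ω → ℝ} (hE : ∀ j, Measurable (E j))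
    (hindep : iIndepFun E μ)
    (htail : ∀ j, ∀ t, 0 ≤ t → μ {ω | t < E j ω} = ENNReal.ofReal (exp (-t))) (m : ℕ) :
    μ.real {ω | ∑ j ∈ Finset.range m, E j ω ≤ m / 2} ≤ (exp 2⁻¹ / 2) ^ m := by
  have hsum : (fun ω => ∑ j ∈ Finset.range m, E j ω) = ∑ j ∈ Finset.range m, E j := by
    funext ω
    simp [Finset.sum_apply]
  have hmgf : mgf (fun ω => ∑ j ∈ Finset.range m, E j ω) μ (-1) = 2⁻¹ ^ m := by
    rw [hsum, hindep.mgf_sum hE,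
      Finset.prod_congr rfl fun j _ => mgf_neg_one_of_exp_tail (hE j) (htail j),
      Finset.prod_const, Finset.card_range]
  have hint : Integrable (fun ω => exp (-1 * ∑ j ∈ Finset.range m, E j ω)) μ := by
    refine integrable_exp_neg_of_ae_nonneg (Finset.measurable_sum _ fun j _ => hE j) ?_
    filter_upwards [ae_all_iff.2 fun j => ae_pos_of_exp_tail (hE j) (htail j)] with ω hω
    exact Finset.sum_nonneg fun j _ => (hω j).le
  calc μ.real {ω | ∑ j ∈ Finset.range m, E j ω ≤ m / 2}
      ≤ exp (-(-1) * (m / 2)) * 2⁻¹ ^ m := hmgf ▸ measure_le_le_exp_mul_mgf _ (by norm_num) hint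
    _ = (exp 2⁻¹ / 2) ^ m := by
      rw [neg_neg, one_mul, div_eq_mul_inv (m : ℝ), mul_comm, exp_nat_mul]
      ring

end ExponentialTail

section WeightedCount

variable {Ω : Type*} {A : ℕ → Set Ω}

noncomputable def weightedCount (A : ℕ → Set Ω) (ω : Ω) : ℝ≥0∞ :=
  ∑' m, (A m).indicator (fun _ => (m : ℝ≥0∞)) ω

theorem measurable_weightedCount [MeasurableSpace Ω] (hA : ∀ m, MeasurableSet (A m)) :
    Measurable (weightedCount A) :=
  Measurable.tsum fun m => measurable_const.indicator (hA m)

theorem notMem_of_toReal_weightedCount_lt {ω : Ω} (hω : weightedCount A ω ≠ ∞) {m : ℕ}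
    (hm : (weightedCount A ω).toReal < m) : ω ∉ A m := fun hmem => by
  have hle : (m : ℝ≥0∞) ≤ weightedCount A ω :=
    calc (m : ℝ≥0∞) = (A m).indicator (fun _ => (m : ℝ≥0∞)) ω :=
          (indicator_of_mem hmem (fun _ => (m : ℝ≥0∞))).symm
      _ ≤ weightedCount A ω := ENNReal.le_tsum m
  exact hm.not_ge (by simpa using ENNReal.toReal_mono hω hle)

theorem lintegral_weightedCount_ne_top [MeasurableSpace Ω] {μ : Measure Ω}
    (hA : ∀ m, MeasurableSet (A m)) {c : ℝ} (hc0 : 0 ≤ c) (hc1 : c < 1)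
    (hμ : ∀ m, μ (A m) ≤ ENNReal.ofReal (c ^ m)) :
    ∫⁻ ω, weightedCount A ω ∂μ ≠ ∞ := by
  have hsum : Summable fun m : ℕ => (m : ℝ) * c ^ m := by
    simpa using summable_pow_mul_geometric_of_norm_lt_one 1 (by rwa [Real.norm_of_nonneg hc0])
  have hle : ∀ m : ℕ, ∫⁻ ω, (A m).indicator (fun _ => (m : ℝ≥0∞)) ω ∂μ
      ≤ ENNReal.ofReal (m * c ^ m) := fun m => by
    rw [lintegral_indicator_const (hA m), ENNReal.ofReal_mul (Nat.cast_nonneg m),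
      ENNReal.ofReal_natCast]
    exact mul_le_mul_right (hμ m) _
  unfold weightedCount
  rw [lintegral_tsum fun m => (measurable_const.indicator (hA m)).aemeasurable]
  refine ne_top_of_le_ne_top ?_ (ENNReal.tsum_le_tsum hle)
  rw [← ENNReal.ofReal_tsum_of_nonneg (fun m => by positivity) hsum]
  exact ENNReal.ofReal_ne_top

end WeightedCount

/-- Let `κ > 0`, `0 < α < 2`, and let `0 < x_1 < x_2 < ⋯` be a unit-rate
Poisson process on `(0,∞)` (realized as `x_k = E_1 + ⋯ + E_k` with `(E_j)` i.i.d. exponential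
of mean 1). With `τ_κ = inf {t ∈ ℕ : Σ_{k ≥ t+1} x_k^{-2/α} ≤ κ}`, one has `𝔼[τ_κ] < ∞`, and
`𝔼[τ_κ] → 0` as `κ → ∞`. -/
theorem stmt14 {Ω : Type*} [MeasureSpace Ω] [IsProbabilityMeasure (ℙ : Measure Ω)]
    (α : ℝ) (hα0 : 0 < α) (hα2 : α < 2)
    (E : ℕ → Ω → ℝ) (hmeas : ∀ j, Measurable (E j))
    (hindep : iIndepFun E ℙ)
    (hexp : ∀ j, ∀ t : ℝ, 0 ≤ t → ℙ {ω | t < E j ω} = ENNReal.ofReal (Real.exp (-t)))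
    (τ : ℝ → Ω → ℕ)
    (hτ : ∀ κ : ℝ, ∀ ω, τ κ ω = sInf {t : ℕ |
      ∑' k : ℕ, (∑ j ∈ Finset.range (t + k + 1), E j ω) ^ (-(2 / α)) ≤ κ}) :
    (∀ κ : ℝ, 0 < κ → Integrable (fun ω => (τ κ ω : ℝ)) ℙ) ∧
    Tendsto (fun κ : ℝ => ∫ ω, (τ κ ω : ℝ) ∂ℙ) atTop (nhds 0) := by
  set S : ℕ → Ω → ℝ := fun m ω => ∑ j ∈ Finset.range m, E j ω
  have hS : ∀ m, Measurable (S m) := fun m => Finset.measurable_sum _ fun j _ => hmeas j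
  have hτS : ∀ κ ω, τ κ ω = tailIndex (fun m => S m ω) (2 / α) κ := hτ
  set bad : ℕ → Set Ω := fun m => {ω | S m ω ≤ m / 2}
  have hbad : ∀ m, MeasurableSet (bad m) := fun m => measurableSet_le (hS m) measurable_const
  have hG : ∫⁻ ω, weightedCount bad ω ≠ ∞ :=
    lintegral_weightedCount_ne_top hbad (by positivity) exp_inv_two_div_two_lt_one fun m =>
      ENNReal.le_ofReal_iff_toReal_le (measure_ne_top _ _) (by positivity) |>.2
        (measureReal_sum_le_half_le hmeas hindep hexp m)
  have hGint : Integrable (fun ω => (weightedCount bad ω).toReal) :=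
    integrable_toReal_of_lintegral_ne_top (measurable_weightedCount hbad).aemeasurable hG
  have hτmeas : ∀ κ, AEStronglyMeasurable (fun ω => (τ κ ω : ℝ)) := fun κ => by
    simp only [hτS]
    exact (measurable_from_top.comp (measurable_tailIndex hS _ κ)).aestronglyMeasurable
  have hτle : ∀ κ > 0, ∃ N : ℕ, ∀ κ' ≥ κ,
      ∀ᵐ ω, ‖(τ κ' ω : ℝ)‖ ≤ N + (weightedCount bad ω).toReal := by
    intro κ hκ
    obtain ⟨N, hN⟩ := exists_tailIndex_le ((one_lt_div hα0).2 hα2) hκ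
    refine ⟨N, fun κ' hκ' => ?_⟩
    filter_upwards [ae_lt_top (measurable_weightedCount hbad) hG] with ω hω
    rw [hτS, Real.norm_natCast]
    exact hN κ' hκ' _ _ ENNReal.toReal_nonneg fun m hm =>
      not_le.1 (notMem_of_toReal_weightedCount_lt hω.ne hm)
  refine ⟨fun κ hκ => ?_, ?_⟩
  · obtain ⟨N, hN⟩ := hτle κ hκ
    exact ((integrable_const _).add hGint).mono' (hτmeas κ) (hN κ le_rfl)
  · obtain ⟨N, hN⟩ := hτle 1 one_pos
    simpa only [integral_zero] using
      tendsto_integral_filter_of_dominated_convergence (f := fun _ => 0) _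
        (Eventually.of_forall hτmeas) ((eventually_ge_atTop 1).mono hN)
        ((integrable_const (N : ℝ)).add hGint)
        (ae_of_all _ fun ω => by simpa only [hτS] using tendsto_tailIndex_atTop _ _)
end
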